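/- arXiv:math/0502421 — 2 statements merged into one kernel-verified Lean document; each statement's English description precedes it below -/
import Mathlib

section
/- With λ > 1, p : ℕ → ℝ positive, and A m = (1 / p m) * ∑' k, p (m+k+1) / λ^(k+1) (series convergent), the price of a deferred annuity x m n = (1 / p m) * ∑' k, p (m + n + k) / λ^(n+k) satisfies, for n ≥ 1, x m n = (1 / λ^(n-1)) * (p (m+n-1) / p m) * A (m+n-1). -/
theorem tsum_div_pow_add_succ {K : Type*} [Field K] [TopologicalSpace K]
    [IsTopologicalSemiring K] [T2Space K] (p : ℕ → K) (l : K) (m n : ℕ) :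
    ∑' k : ℕ, p (m + (n + 1) + k) / l ^ (n + 1 + k)
      = (l ^ n)⁻¹ * ∑' k : ℕ, p (m + n + k + 1) / l ^ (k + 1) := by
  rw [← tsum_mul_left]
  refine tsum_congr fun k => ?_
  rw [show m + (n + 1) + k = m + n + k + 1 by ring, show n + 1 + k = n + (k + 1) by ring, pow_add]
  ring

theorem euler_deferred_annuity_general (l : ℝ)
    (p : ℕ → ℝ) (hp : ∀ m, 0 < p m)
    (A : ℕ → ℝ)
    (hA : ∀ m, A m = (1 / p m) * ∑' k : ℕ, p (m + k + 1) / l ^ (k + 1))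
    (x : ℕ → ℕ → ℝ)
    (hx : ∀ m n, x m n = (1 / p m) * ∑' k : ℕ, p (m + n + k) / l ^ (n + k)) :
    ∀ m n, 1 ≤ n →
      x m n = (1 / l ^ (n - 1)) * (p (m + n - 1) / p m) * A (m + n - 1) := by
  intro m n hn
  obtain ⟨n, rfl⟩ := Nat.exists_eq_add_one.mpr hn
  rw [hx, hA, tsum_div_pow_add_succ, Nat.add_sub_cancel, ← add_assoc, Nat.add_sub_cancel]
  have := (hp (m + n)).ne'
  field_simp

/-- Euler §15: deferred annuity reduces to an ordinary annuity. -/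
theorem euler_deferred_annuity (l : ℝ) (hl : 1 < l)
    (p : ℕ → ℝ) (hp : ∀ m, 0 < p m) (hbd : ∃ C, ∀ m, p m ≤ C)
    (hsum : ∀ m, Summable fun k : ℕ => p (m + k + 1) / l ^ (k + 1))
    (A : ℕ → ℝ)
    (hA : ∀ m, A m = (1 / p m) * ∑' k : ℕ, p (m + k + 1) / l ^ (k + 1))
    (x : ℕ → ℕ → ℝ)
    (hx : ∀ m n, x m n = (1 / p m) * ∑' k : ℕ, p (m + n + k) / l ^ (n + k)) :
    ∀ m n, 1 ≤ n →
      x m n = (1 / l ^ (n - 1)) * (p (m + n - 1) / p m) * A (m + n - 1) :=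
  euler_deferred_annuity_general l p hp A hA x hx
end

section
/- Let λ > 1 and let p : ℕ → ℝ be positive with p m = 0 for m > N. Suppose the manager charges price x ≥ A m (with A m the fair value (1/p m) ∑_{k=0}^{N-m-1} p(m+k+1)/λ^(k+1)) to each of the p m annuitants. Define the fund F recursively by F 0 = p m * x and F (j+1) = λ * F j - p (m+j+1). Then F j ≥ 0 for all j ≤ N - m, i.e. the manager's fund never goes negative before all annuitants die. -/
/-!
Discounting at rate `λ`, the fund after `j` years equals `λ ^ j` times the initial capital minus the
present value of the first `j` annual payments. A fair premium makes the initial capital at least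
the present value of all payments, and present values of nonnegative payments grow with the horizon.
-/

open Finset

section PresentValue

variable (l : ℝ) (c : ℕ → ℝ)

/-- Payment `c i` falls due at the end of year `i + 1`. -/
noncomputable def presentValue (n : ℕ) : ℝ :=
  ∑ i ∈ range n, c i / l ^ (i + 1)

variable {l c}

theorem presentValue_mono {j n : ℕ} (hl : 0 ≤ l) (hc : ∀ i < n, 0 ≤ c i) (hjn : j ≤ n) :
    presentValue l c j ≤ presentValue l c n :=
  sum_le_sum_of_subset_of_nonneg (range_subset_range.mpr hjn) fun i hi _ ↦
    div_nonneg (hc i (mem_range.mp hi)) (pow_nonneg hl _)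

theorem eq_pow_mul_sub_presentValue {F : ℕ → ℝ} (hl : l ≠ 0)
    (hF : ∀ j, F (j + 1) = l * F j - c j) (j : ℕ) :
    F j = l ^ j * (F 0 - presentValue l c j) := by
  induction j with
  | zero => simp [presentValue]
  | succ j ih =>
    rw [hF j, ih]
    simp only [presentValue, sum_range_succ]
    field_simp
    ring

theorem nonneg_of_presentValue_le {F : ℕ → ℝ} (hl : 0 < l)
    (hF : ∀ j, F (j + 1) = l * F j - c j) {j : ℕ} (hj : presentValue l c j ≤ F 0) :
    0 ≤ F j := by
  rw [eq_pow_mul_sub_presentValue hl.ne' hF j]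
  exact mul_nonneg (pow_nonneg hl.le j) (sub_nonneg.mpr hj)

end PresentValue

theorem euler_fund_nonneg_general (l : ℝ) (hl : 1 < l) (N m : ℕ) (hm : m ≤ N)
    (p : ℕ → ℝ) (hp : ∀ k ≤ N, 0 < p k)
    (A : ℝ)
    (hA : A = (1 / p m) * ∑ k ∈ Finset.range (N - m), p (m + k + 1) / l ^ (k + 1))
    (x : ℝ) (hx : A ≤ x)
    (F : ℕ → ℝ) (hF0 : F 0 = p m * x)
    (hFs : ∀ j, F (j + 1) = l * F j - p (m + j + 1)) :
    ∀ j ≤ N - m, 0 ≤ F j := by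
  intro j hj
  have hl0 : 0 < l := zero_lt_one.trans hl
  have hpm : 0 < p m := hp m hm
  have hpayments : ∀ i < N - m, 0 ≤ p (m + i + 1) := fun i hi ↦ (hp _ (by omega)).le
  have hfair : presentValue l (fun i ↦ p (m + i + 1)) (N - m) = p m * A := by
    rw [hA, presentValue]
    field_simp
  refine nonneg_of_presentValue_le hl0 hFs ?_
  calc presentValue l (fun i ↦ p (m + i + 1)) j
      ≤ presentValue l (fun i ↦ p (m + i + 1)) (N - m) := presentValue_mono hl0.le hpayments hj
    _ = p m * A := hfair
    _ ≤ F 0 := hF0 ▸ mul_le_mul_of_nonneg_left hx hpm.le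

/-- §8: the fair premium suffices — the fund never goes negative. -/
theorem euler_fund_nonneg (l : ℝ) (hl : 1 < l) (N m : ℕ) (hm : m ≤ N)
    (p : ℕ → ℝ) (hp : ∀ k ≤ N, 0 < p k) (hp0 : ∀ k, N < k → p k = 0)
    (A : ℝ)
    (hA : A = (1 / p m) * ∑ k ∈ Finset.range (N - m), p (m + k + 1) / l ^ (k + 1))
    (x : ℝ) (hx : A ≤ x)
    (F : ℕ → ℝ) (hF0 : F 0 = p m * x)
    (hFs : ∀ j, F (j + 1) = l * F j - p (m + j + 1)) :
    ∀ j ≤ N - m, 0 ≤ F j :=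
  euler_fund_nonneg_general l hl N m hm p hp A hA x hx F hF0 hFs
end
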